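/- Let n ≥ 1 and let ν_1, …, ν_l and n_1, …, n_l be integers with n_i ≥ 1 and −(n_i+1) < ν_i < n_i+1 for each i. Set μ_{i} := ν_i/(n_i+1), so that −1 < μ_i < 1 for each i. Then there exists a unique real number a_0 > −1/2 such that ∫_{−1/(1+2a_0)}^{1} x·∏_{i=1}^{l} (1 + {μ_i + a_0(1+μ_i)}·x)^{n_i} dx = 0. -/

import Mathlib

open Real MeasureTheory Filter Set

section ToricAux

variable {l : ℕ}

private lemma toric_fac_pos (μ : Fin l → ℝ) (hμ : ∀ i, -1 < μ i ∧ μ i < 1)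
    {a : ℝ} (ha : -1/2 < a) (i : Fin l) {x : ℝ}
    (hx1 : -1/(1+2*a) ≤ x) (hx2 : x ≤ 1) :
    0 < 1 + (μ i + a * (1 + μ i)) * x := by
  obtain ⟨h1, h2⟩ := hμ i
  have h2a : (0:ℝ) < 1 + 2*a := by linarith
  set c := μ i + a * (1 + μ i) with hc
  rcases le_or_gt 0 c with h | h
  · have hm : c * (-1/(1+2*a)) ≤ c * x := mul_le_mul_of_nonneg_left hx1 h
    have he : c * (-1/(1+2*a)) = -(c/(1+2*a)) := by ring
    have hlt : c / (1+2*a) < 1 := (div_lt_one h2a).mpr (by nlinarith)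
    nlinarith [hm, he]
  · have hm : c * 1 ≤ c * x := mul_le_mul_of_nonpos_left hx2 h.le
    nlinarith [hm]

set_option maxHeartbeats 1000000 in
private theorem toric_key (hl : 1 ≤ l) (nn : Fin l → ℕ) (μ : Fin l → ℝ)
    (hμ : ∀ i, -1 < μ i ∧ μ i < 1) :
    ∃! a₀ : ℝ, -1/2 < a₀ ∧
      (∫ x in (-1/(1+2*a₀))..1,
          x * ∏ i, (1 + (μ i + a₀ * (1 + μ i)) * x) ^ (nn i)) = 0 := by
  have hne : (Finset.univ : Finset (Fin l)).Nonempty := ⟨⟨0, hl⟩, Finset.mem_univ _⟩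
  set f : ℝ → ℝ → ℝ := fun a x => x * ∏ i, (1 + (μ i + a * (1 + μ i)) * x) ^ (nn i) with hf
  set F : ℝ → ℝ := fun a => ∫ x in (-1/(1+2*a))..1, f a x with hF
  set u : ℝ → ℝ := fun a => -1/(1+2*a) with hu
  -- continuity of the integrand jointly
  have hfc : Continuous (Function.uncurry f) := by
    apply Continuous.mul continuous_snd
    apply continuous_finset_prod
    intro i _
    fun_prop
  have hfca : ∀ a, Continuous (f a) := fun a =>
    hfc.comp (by fun_prop : Continuous fun x : ℝ => (a, x))
  have hfi : ∀ a p q : ℝ, IntervalIntegrable (f a) volume p q := fun a p q =>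
    (hfca a).intervalIntegrable p q
  -- positivity of the product
  have hgpos : ∀ {a : ℝ}, -1/2 < a → ∀ {x : ℝ}, u a ≤ x → x ≤ 1 →
      0 < ∏ i, (1 + (μ i + a * (1 + μ i)) * x) ^ (nn i) := by
    intro a ha x hx1 hx2
    apply Finset.prod_pos
    intro i _
    exact pow_pos (toric_fac_pos μ hμ ha i hx1 hx2) _
  -- basic facts about u
  have hupos : ∀ {a : ℝ}, -1/2 < a → (0:ℝ) < 1 + 2*a := fun {a} ha => by linarith
  have huneg : ∀ {a : ℝ}, -1/2 < a → u a < 0 := by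
    intro a ha
    have := hupos ha
    simp only [hu]
    rw [neg_div]
    simpa using div_pos one_pos this
  -- strict monotonicity
  have hmono : StrictMonoOn F (Ioi (-1/2 : ℝ)) := by
    intro a₁ ha₁ a₂ ha₂ h12
    simp only [mem_Ioi] at ha₁ ha₂
    have h1 := hupos ha₁
    have h2 := hupos ha₂
    have huu : u a₁ < u a₂ := by
      simp only [hu, neg_div]
      have : 1/(1+2*a₂) < 1/(1+2*a₁) := by
        apply one_div_lt_one_div_of_lt h1; linarith
      linarith
    have hu2 : u a₂ < 0 := huneg ha₂
    have hsplit : (∫ x in (u a₁)..(u a₂), f a₁ x) + (∫ x in (u a₂)..1, f a₁ x)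
        = F a₁ := intervalIntegral.integral_add_adjacent_intervals (hfi _ _ _) (hfi _ _ _)
    have hpart1 : (∫ x in (u a₁)..(u a₂), f a₁ x) < 0 := by
      have : 0 < ∫ x in (u a₁)..(u a₂), -(f a₁ x) := by
        apply intervalIntegral.intervalIntegral_pos_of_pos_on
        · exact (hfi a₁ _ _).neg
        · intro x hx
          have hx1 : u a₁ ≤ x := hx.1.le
          have hx2 : x ≤ 1 := by nlinarith [hx.2, hu2]
          have hg := hgpos ha₁ hx1 hx2
          have hxneg : x < 0 := lt_trans hx.2 hu2
          simp only [hf]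
          nlinarith [hg, hxneg]
        · exact huu
      rw [intervalIntegral.integral_neg] at this
      linarith
    have hpart2 : (∫ x in (u a₂)..1, f a₁ x) ≤ ∫ x in (u a₂)..1, f a₂ x := by
      apply intervalIntegral.integral_mono_on (by linarith [hu2] : u a₂ ≤ 1)
        (hfi _ _ _) (hfi _ _ _)
      intro x hx
      obtain ⟨hx1, hx2⟩ := hx
      have hx1' : u a₁ ≤ x := le_trans huu.le hx1
      simp only [hf]
      rcases le_or_gt 0 x with hx0 | hx0
      · -- x ≥ 0 : product increases with a
        apply mul_le_mul_of_nonneg_left _ hx0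
        apply Finset.prod_le_prod
        · intro i _
          exact (pow_pos (toric_fac_pos μ hμ ha₁ i hx1' hx2) _).le
        · intro i _
          apply pow_le_pow_left₀ (toric_fac_pos μ hμ ha₁ i hx1' hx2).le
          have h1μ : 0 < 1 + μ i := by linarith [(hμ i).1]
          nlinarith [mul_le_mul_of_nonneg_left h12.le hx0]
      · -- x < 0 : product decreases with a
        apply mul_le_mul_of_nonpos_left _ hx0.le
        apply Finset.prod_le_prod
        · intro i _
          exact (pow_pos (toric_fac_pos μ hμ ha₂ i hx1 hx2) _).le
        · intro i _
          apply pow_le_pow_left₀ (toric_fac_pos μ hμ ha₂ i hx1 hx2).le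
          have h1μ : 0 < 1 + μ i := by linarith [(hμ i).1]
          nlinarith [mul_nonneg (mul_pos h1μ (sub_pos.mpr h12)).le
            (neg_nonneg.mpr hx0.le)]
    calc F a₁ = (∫ x in (u a₁)..(u a₂), f a₁ x) + (∫ x in (u a₂)..1, f a₁ x) :=
          hsplit.symm
      _ < ∫ x in (u a₂)..1, f a₂ x := by linarith
      _ = F a₂ := rfl
  -- continuity of F on the half line
  have hcont : ContinuousOn F (Ioi (-1/2 : ℝ)) := by
    have h1 : Continuous fun p : ℝ × ℝ => ∫ t in (1:ℝ)..p.2, f p.1 t :=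
      intervalIntegral.continuous_parametric_primitive_of_continuous hfc
    have h2 : ContinuousOn u (Ioi (-1/2 : ℝ)) := by
      apply ContinuousOn.div continuousOn_const (by fun_prop)
      intro x hx
      exact ne_of_gt (hupos hx)
    have h3 : ContinuousOn (fun a : ℝ => (a, u a)) (Ioi (-1/2 : ℝ)) :=
      (continuousOn_id).prodMk h2
    have h4 : ContinuousOn (fun a => -∫ t in (1:ℝ)..(u a), f a t) (Ioi (-1/2:ℝ)) :=
      (h1.comp_continuousOn h3).neg
    apply h4.congr
    intro a _
    simp only [hF]
    rw [← intervalIntegral.integral_symm]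
  -- the negative point
  obtain ⟨an, hanI, hanneg⟩ : ∃ a ∈ Ioi (-1/2 : ℝ), F a < 0 := by
    set m : ℝ := Finset.univ.inf' hne fun i => 1/(1+μ i) with hm
    have hm2 : 1/2 < m := by
      rw [hm, Finset.lt_inf'_iff]
      intro i _
      have h1 : 0 < 1 + μ i := by linarith [(hμ i).1]
      have h2 : 1 + μ i < 2 := by linarith [(hμ i).2]
      rw [div_lt_div_iff₀ two_pos h1]
      linarith
    set t : ℝ := min (m - 1/2) (1/4) with ht
    have htpos : 0 < t := by
      apply lt_min (by linarith) (by norm_num)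
    have ht4 : t ≤ 1/4 := min_le_right _ _
    set a : ℝ := t - 1/2 with haa
    have haI : a ∈ Ioi (-1/2 : ℝ) := by simp only [mem_Ioi, haa]; linarith
    have h2a : (0:ℝ) < 1 + 2*a := hupos haI
    have h2a' : 1 + 2*a = 2*t := by rw [haa]; ring
    refine ⟨a, haI, ?_⟩
    -- each coefficient is ≤ 0
    have hcneg : ∀ i, μ i + a * (1 + μ i) ≤ 0 := by
      intro i
      have h1 : 0 < 1 + μ i := by linarith [(hμ i).1]
      have hma : m ≤ 1/(1+μ i) := Finset.inf'_le _ (Finset.mem_univ i)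
      have h1a : 1 + a ≤ 1/(1+μ i) := by
        have : t ≤ m - 1/2 := min_le_left _ _
        rw [haa]; linarith
      have := mul_le_mul_of_nonneg_left h1a h1.le
      rw [mul_one_div, div_self (ne_of_gt h1)] at this
      nlinarith
    have hub : u a = -(1/(2*t)) := by
      simp only [hu, h2a', neg_div]
    have hb2 : (2:ℝ) ≤ 1/(2*t) := by
      rw [le_div_iff₀ (by linarith)]
      linarith
    -- split F a at 0
    have hsplit : (∫ x in (u a)..0, f a x) + (∫ x in (0:ℝ)..1, f a x) = F a :=
      intervalIntegral.integral_add_adjacent_intervals (hfi _ _ _) (hfi _ _ _)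
    have hpart1 : (∫ x in (u a)..0, f a x) ≤ -(1/(2*t))^2/2 := by
      have hcalc : (∫ x in (u a)..0, x) = -(1/(2*t))^2/2 := by
        rw [integral_id, hub]; ring
      rw [← hcalc]
      apply intervalIntegral.integral_mono_on (huneg haI).le
        (hfi _ _ _) (intervalIntegral.intervalIntegrable_id)
      intro x hx
      obtain ⟨hx1, hx2⟩ := hx
      have hgge : 1 ≤ ∏ i, (1 + (μ i + a * (1 + μ i)) * x) ^ (nn i) := by
        apply le_trans (le_of_eq Finset.prod_const_one.symm)
        apply Finset.prod_le_prod (fun i _ => zero_le_one)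
        intro i _
        apply one_le_pow₀
        nlinarith [mul_nonneg (neg_nonneg.mpr (hcneg i)) (neg_nonneg.mpr hx2)]
      simp only [hf]
      nlinarith [hgge]
    have hpart2 : (∫ x in (0:ℝ)..1, f a x) ≤ 1/2 := by
      have hcalc : (∫ x in (0:ℝ)..1, x) = 1/2 := by
        rw [integral_id]; norm_num
      rw [← hcalc]
      apply intervalIntegral.integral_mono_on (by norm_num)
        (hfi _ _ _) (intervalIntegral.intervalIntegrable_id)
      intro x hx
      obtain ⟨hx1, hx2⟩ := hx
      have hgle : (∏ i, (1 + (μ i + a * (1 + μ i)) * x) ^ (nn i)) ≤ 1 := by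
        apply Finset.prod_le_one
        · intro i _
          have hxu : u a ≤ x := le_trans (huneg haI).le hx1
          exact (pow_pos (toric_fac_pos μ hμ haI i hxu hx2) _).le
        · intro i _
          apply pow_le_one₀ (by
            have hxu : u a ≤ x := le_trans (huneg haI).le hx1
            exact (toric_fac_pos μ hμ haI i hxu hx2).le)
          nlinarith [mul_nonpos_of_nonpos_of_nonneg (hcneg i) hx1]
      simp only [hf]
      nlinarith [hgle]
    have : F a ≤ -(1/(2*t))^2/2 + 1/2 := by linarith
    nlinarith [hb2]
  -- the positive point
  obtain ⟨ap, hapI, happos⟩ : ∃ a ∈ Ioi (-1/2 : ℝ), 0 < F a := by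
    set a : ℝ := max 2 (Finset.univ.sup' hne fun i => 1/(1+μ i)) with haa
    have ha2 : (2:ℝ) ≤ a := le_max_left _ _
    have haI : a ∈ Ioi (-1/2 : ℝ) := by simp only [mem_Ioi]; linarith
    have h2a : (0:ℝ) < 1 + 2*a := hupos haI
    refine ⟨a, haI, ?_⟩
    have hcpos : ∀ i, 0 ≤ μ i + a * (1 + μ i) := by
      intro i
      have h1 : 0 < 1 + μ i := by linarith [(hμ i).1]
      have hma : 1/(1+μ i) ≤ a :=
        le_trans (Finset.le_sup' (fun i => 1/(1+μ i)) (Finset.mem_univ i)) (le_max_right _ _)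
      have := mul_le_mul_of_nonneg_left hma h1.le
      rw [mul_one_div, div_self (ne_of_gt h1)] at this
      nlinarith
    have hub : -(1/5 : ℝ) ≤ u a := by
      simp only [hu, neg_div]
      have : 1/(1+2*a) ≤ 1/5 := by
        apply one_div_le_one_div_of_le (by norm_num)
        linarith
      linarith
    have hsplit : (∫ x in (u a)..0, f a x) + (∫ x in (0:ℝ)..1, f a x) = F a :=
      intervalIntegral.integral_add_adjacent_intervals (hfi _ _ _) (hfi _ _ _)
    have hpart1 : (u a)^2/2 ≥ 0 := by positivity
    have hpart1' : -((1/5:ℝ)^2)/2 ≤ ∫ x in (u a)..0, f a x := by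
      have hcalc : (∫ x in (u a)..0, x) = -(u a)^2/2 := by
        rw [integral_id]; ring
      have hmono' : (∫ x in (u a)..0, x) ≤ ∫ x in (u a)..0, f a x := by
        apply intervalIntegral.integral_mono_on (huneg haI).le
          (intervalIntegral.intervalIntegrable_id) (hfi _ _ _)
        intro x hx
        obtain ⟨hx1, hx2⟩ := hx
        have hgle : (∏ i, (1 + (μ i + a * (1 + μ i)) * x) ^ (nn i)) ≤ 1 := by
          apply Finset.prod_le_one
          · intro i _
            exact (pow_pos (toric_fac_pos μ hμ haI i hx1 (by linarith)) _).le
          · intro i _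
            apply pow_le_one₀ (toric_fac_pos μ hμ haI i hx1 (by linarith)).le
            nlinarith [mul_nonpos_of_nonneg_of_nonpos (hcpos i) hx2]
        simp only [hf]
        nlinarith [hgle]
      have hua : -(1/5:ℝ) ≤ u a := hub
      have : -(u a)^2/2 ≥ -((1/5:ℝ)^2)/2 := by nlinarith [huneg haI]
      linarith [hcalc ▸ hmono']
    have hpart2 : (1:ℝ)/2 ≤ ∫ x in (0:ℝ)..1, f a x := by
      have hcalc : (∫ x in (0:ℝ)..1, x) = 1/2 := by
        rw [integral_id]; norm_num
      rw [← hcalc]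
      apply intervalIntegral.integral_mono_on (by norm_num)
        (intervalIntegral.intervalIntegrable_id) (hfi _ _ _)
      intro x hx
      obtain ⟨hx1, hx2⟩ := hx
      have hgge : 1 ≤ ∏ i, (1 + (μ i + a * (1 + μ i)) * x) ^ (nn i) := by
        apply le_trans (le_of_eq Finset.prod_const_one.symm)
        apply Finset.prod_le_prod (fun i _ => zero_le_one)
        intro i _
        apply one_le_pow₀
        nlinarith [mul_nonneg (hcpos i) hx1]
      simp only [hf]
      nlinarith [hgge]
    nlinarith [hpart1', hpart2, hsplit]
  -- existence via IVT
  simp only [mem_Ioi] at hanI hapI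
  have hanp : an < ap := by
    rcases lt_trichotomy an ap with h | h | h
    · exact h
    · exfalso; rw [h] at hanneg; linarith
    · exfalso; have := hmono hapI hanI h; linarith
  have hIcc : Icc an ap ⊆ Ioi (-1/2 : ℝ) := fun x hx => lt_of_lt_of_le hanI hx.1
  have hivt := intermediate_value_Icc hanp.le (hcont.mono hIcc)
  have h0mem : (0:ℝ) ∈ Icc (F an) (F ap) := ⟨hanneg.le, happos.le⟩
  obtain ⟨a₀, ha₀mem, ha₀⟩ := hivt h0mem
  refine ⟨a₀, ⟨lt_of_lt_of_le hanI ha₀mem.1, ha₀⟩, ?_⟩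
  intro a' ⟨ha'I, ha'0⟩
  have ha'F : F a' = 0 := ha'0
  have ha₀I : -1/2 < a₀ := lt_of_lt_of_le hanI ha₀mem.1
  rcases lt_trichotomy a' a₀ with h | h | h
  · exfalso
    have := hmono (mem_Ioi.mpr ha'I) (mem_Ioi.mpr ha₀I) h
    rw [ha'F, ha₀] at this; exact lt_irrefl _ this
  · exact h
  · exfalso
    have := hmono (mem_Ioi.mpr ha₀I) (mem_Ioi.mpr ha'I) h
    rw [ha'F, ha₀] at this; exact lt_irrefl _ this

end ToricAux

theorem toric_example_unique_reeb_parameter (l : ℕ) (hl : 1 ≤ l)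
    (ν : Fin l → ℤ) (nn : Fin l → ℕ) (hnn : ∀ i, 1 ≤ nn i)
    (hν : ∀ i, -((nn i : ℤ) + 1) < ν i ∧ ν i < (nn i : ℤ) + 1) :
    (∀ i, -1 < (ν i : ℝ)/((nn i : ℝ) + 1) ∧ (ν i : ℝ)/((nn i : ℝ) + 1) < 1) ∧
    ∃! a₀ : ℝ, -1/2 < a₀ ∧
      (∫ x in (-1/(1+2*a₀))..1,
          x * ∏ i, (1 + ((ν i : ℝ)/((nn i : ℝ) + 1)
            + a₀ * (1 + (ν i : ℝ)/((nn i : ℝ) + 1))) * x) ^ (nn i)) = 0 := by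
  have hμ : ∀ i, -1 < (ν i : ℝ)/((nn i : ℝ) + 1) ∧ (ν i : ℝ)/((nn i : ℝ) + 1) < 1 := by
    intro i
    have hn : (0:ℝ) < (nn i : ℝ) + 1 := by positivity
    have h1 : -((nn i : ℝ) + 1) < (ν i : ℝ) := by exact_mod_cast (hν i).1
    have h2 : (ν i : ℝ) < (nn i : ℝ) + 1 := by exact_mod_cast (hν i).2
    constructor
    · rw [lt_div_iff₀ hn]; linarith
    · rw [div_lt_iff₀ hn]; linarith
  exact ⟨hμ, toric_key hl nn (fun i => (ν i : ℝ)/((nn i : ℝ) + 1)) hμ⟩
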